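/- If φ : L → L' is a Lie algebra homomorphism from an almost Abelian Lie algebra L = F e₀ ⋉ V, then the image φ(L) is either Abelian or almost Abelian. -/

import Mathlib

variable {F : Type*} [Field F] {V : Type*} [AddCommGroup V] [Module F V]

/-- The almost Abelian Lie algebra `F e₀ ⋉ V` determined by the operator `T = ad_{e₀}|_V`:
the underlying vector space is `F × V`, with bracket `[(t,v),(s,w)] = (0, t • T w - s • T v)`. -/
def AA (F V : Type*) [Field F] [AddCommGroup V] [Module F V] (_T : Module.End F V) : Type _ :=
  F × V

namespace AA

variable {T : Module.End F V}

instance : AddCommGroup (AA F V T) := inferInstanceAs (AddCommGroup (F × V))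
instance : Module F (AA F V T) := inferInstanceAs (Module F (F × V))

instance : LieRing (AA F V T) where
  bracket := fun (x y : F × V) => (((0 : F), x.1 • T y.2 - y.1 • T x.2) : F × V)
  add_lie := by
    rintro ⟨a, u⟩ ⟨b, v⟩ ⟨c, w⟩
    show (((0 : F), (a + b) • T w - c • T (u + v)) : F × V)
      = (((0 : F), a • T w - c • T u) : F × V) + (((0 : F), b • T w - c • T v) : F × V)
    ext
    · simp
    · show (a + b) • T w - c • T (u + v) = (a • T w - c • T u) + (b • T w - c • T v)
      simp only [map_add, smul_add, add_smul]
      module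
  lie_add := by
    rintro ⟨a, u⟩ ⟨b, v⟩ ⟨c, w⟩
    show (((0 : F), a • T (v + w) - (b + c) • T u) : F × V)
      = (((0 : F), a • T v - b • T u) : F × V) + (((0 : F), a • T w - c • T u) : F × V)
    ext
    · simp
    · show a • T (v + w) - (b + c) • T u = (a • T v - b • T u) + (a • T w - c • T u)
      simp only [map_add, smul_add, add_smul]
      module
  lie_self := by
    rintro ⟨a, u⟩
    show (((0 : F), a • T u - a • T u) : F × V) = (0 : F × V)
    ext
    · simp
    · show a • T u - a • T u = (0 : V)
      simp
  leibniz_lie := by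
    rintro ⟨a, u⟩ ⟨b, v⟩ ⟨c, w⟩
    show (((0 : F), a • T (b • T w - c • T v) - (0 : F) • T u) : F × V)
      = (((0 : F), (0 : F) • T w - c • T (a • T v - b • T u)) : F × V)
        + (((0 : F), b • T (a • T w - c • T u) - (0 : F) • T v) : F × V)
    ext
    · simp
    · show a • T (b • T w - c • T v) - (0 : F) • T u
        = ((0 : F) • T w - c • T (a • T v - b • T u)) + (b • T (a • T w - c • T u) - (0 : F) • T v)
      simp only [map_sub, map_smul, zero_smul, smul_sub, smul_smul]
      module

instance : LieAlgebra F (AA F V T) where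
  lie_smul := by
    rintro r ⟨a, u⟩ ⟨b, v⟩
    show (((0 : F), a • T (r • v) - (r • b) • T u) : F × V)
      = r • (((0 : F), a • T v - b • T u) : F × V)
    ext
    · simp
    · show a • T (r • v) - (r • b) • T u = r • (a • T v - b • T u)
      simp only [map_smul, smul_sub, smul_smul, smul_eq_mul]
      module

/-- The distinguished element `e₀`. -/
def e0 (T : Module.End F V) : AA F V T := ((1, 0) : F × V)

/-- The inclusion of the Abelian ideal `V` into `F e₀ ⋉ V`. -/
def incl (T : Module.End F V) : V →ₗ[F] AA F V T where
  toFun v := ((0, v) : F × V)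
  map_add' u v := by
    show (((0 : F), u + v) : F × V) = (((0 : F), u) : F × V) + (((0 : F), v) : F × V)
    ext <;> simp
  map_smul' r v := by
    show (((0 : F), r • v) : F × V) = r • (((0 : F), v) : F × V)
    ext <;> simp

@[simp] lemma bracket_e0_incl (v : V) : ⁅e0 T, incl T v⁆ = incl T (T v) := by
  show (((0 : F), (1 : F) • T v - (0 : F) • T (0 : V)) : F × V) = (((0 : F), T v) : F × V)
  ext <;> simp

end AA


/-- A Lie algebra is almost Abelian if it is non-Abelian and possesses an Abelian ideal of
codimension 1 (as an `F`-vector subspace). -/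
def IsAlmostAbelian (F L : Type*) [Field F] [LieRing L] [LieAlgebra F L] : Prop :=
  ¬IsLieAbelian L ∧
    ∃ I : LieIdeal F L, IsLieAbelian I ∧ Module.rank F (L ⧸ I.toSubmodule) = 1


/-! `V` is an Abelian ideal of codimension one in `F e₀ ⋉ V`. A surjective Lie homomorphism maps
an Abelian ideal onto an Abelian ideal (`f ⁅I, I⁆ = ⁅f I, f I⁆`) and cannot raise its
codimension, so `φ(L)` has an Abelian ideal of codimension at most one. If `φ(L)` is not Abelian,
that ideal is proper, so its codimension is exactly one. -/

theorem LieIdeal.isLieAbelian_map_of_surjective {R L L' : Type*} [CommRing R] [LieRing L]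
    [LieAlgebra R L] [LieRing L'] [LieAlgebra R L'] {f : L →ₗ⁅R⁆ L'} (hf : Function.Surjective f)
    (I : LieIdeal R L) [IsLieAbelian I] : IsLieAbelian (I.map f) := by
  rw [LieSubmodule.lie_abelian_iff_lie_self_eq_bot, ← LieIdeal.map_bracket_eq f hf,
    (LieSubmodule.lie_abelian_iff_lie_self_eq_bot I).mp inferInstance, LieIdeal.map_eq_bot_iff]
  exact bot_le

universe u v in
theorem Submodule.lift_rank_quotient_map_le_of_surjective {R : Type*} {M : Type u} {N : Type v}
    [Ring R] [AddCommGroup M] [Module R M] [AddCommGroup N] [Module R N] {f : M →ₗ[R] N}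
    (hf : Function.Surjective f) (p : Submodule R M) :
    Cardinal.lift.{u} (Module.rank R (N ⧸ p.map f)) ≤ Cardinal.lift.{v} (Module.rank R (M ⧸ p)) := by
  refine LinearMap.lift_rank_le_of_surjective (p.mapQ (p.map f) f (p.le_comap_map f)) ?_
  intro y
  obtain ⟨x, rfl⟩ := (p.map f).mkQ_surjective y
  obtain ⟨m, rfl⟩ := hf x
  exact ⟨p.mkQ m, rfl⟩

theorem isLieAbelian_or_isAlmostAbelian_of_rank_quotient_le_one {F L : Type*} [Field F]
    [LieRing L] [LieAlgebra F L] (I : LieIdeal F L) [IsLieAbelian I]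
    (hI : Module.rank F (L ⧸ I.toSubmodule) ≤ 1) : IsLieAbelian L ∨ IsAlmostAbelian F L := by
  refine or_iff_not_imp_left.mpr fun hL ↦ ⟨hL, I, inferInstance, le_antisymm hI ?_⟩
  have hI_ne_top : I.toSubmodule ≠ ⊤ := by
    intro hI_top
    rw [LieSubmodule.toSubmodule_eq_top] at hI_top
    subst hI_top
    exact hL ((lie_abelian_iff_equiv_lie_abelian LieIdeal.topEquiv).mp ‹_›)
  have := Submodule.Quotient.nontrivial_iff.mpr hI_ne_top
  exact Cardinal.one_le_iff_pos.mpr rank_pos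

theorem isLieAbelian_or_isAlmostAbelian_of_surjective {F L L' : Type*} [Field F] [LieRing L]
    [LieAlgebra F L] [LieRing L'] [LieAlgebra F L'] {f : L →ₗ⁅F⁆ L'} (hf : Function.Surjective f)
    (I : LieIdeal F L) [IsLieAbelian I] (hI : Module.rank F (L ⧸ I.toSubmodule) ≤ 1) :
    IsLieAbelian L' ∨ IsAlmostAbelian F L' := by
  have := I.isLieAbelian_map_of_surjective hf
  refine isLieAbelian_or_isAlmostAbelian_of_rank_quotient_le_one (I.map f) ?_
  have h := Submodule.lift_rank_quotient_map_le_of_surjective hf I.toSubmodule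
  rw [← LieIdeal.coe_map_of_surjective hf] at h
  exact Cardinal.lift_le_one_iff.mp (h.trans (Cardinal.lift_le_one_iff.mpr hI))

namespace AA

variable {F V : Type*} [Field F] [AddCommGroup V] [Module F V]

def e0Coord (T : Module.End F V) : AA F V T →ₗ[F] F := LinearMap.fst F F V

lemma e0Coord_surjective (T : Module.End F V) : Function.Surjective (e0Coord T) :=
  LinearMap.fst_surjective

def idealV (T : Module.End F V) : LieIdeal F (AA F V T) where
  toSubmodule := LinearMap.ker (e0Coord T)
  lie_mem := fun _ ↦ rfl

instance (T : Module.End F V) : IsLieAbelian (idealV T) := by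
  constructor
  rintro ⟨⟨a, u⟩, ha : a = 0⟩ ⟨⟨b, v⟩, hb : b = 0⟩
  subst ha hb
  ext
  show (((0 : F), (0 : F) • T v - (0 : F) • T u) : F × V) = 0
  simp

lemma rank_quotient_idealV (T : Module.End F V) :
    Module.rank F (AA F V T ⧸ (idealV T).toSubmodule) = 1 := by
  have := ((e0Coord T).quotKerEquivOfSurjective (e0Coord_surjective T)).lift_rank_eq
  rwa [Module.rank_self, Cardinal.lift_one, Cardinal.lift_eq_one] at this

end AA

theorem stmt11_general (F V L' : Type*) [Field F] [AddCommGroup V] [Module F V]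
    [LieRing L'] [LieAlgebra F L'] (T : Module.End F V)
    (φ : AA F V T →ₗ⁅F⁆ L') :
    IsLieAbelian φ.range ∨ IsAlmostAbelian F φ.range :=
  isLieAbelian_or_isAlmostAbelian_of_surjective φ.surjective_rangeRestrict (AA.idealV T)
    (AA.rank_quotient_idealV T).le

/-- The image of a Lie algebra homomorphism out of an almost Abelian Lie algebra `F e₀ ⋉ V` is
either Abelian or almost Abelian. -/
theorem stmt11 (F V L' : Type*) [Field F] [AddCommGroup V] [Module F V]
    [LieRing L'] [LieAlgebra F L'] (T : Module.End F V) (hT : T ≠ 0)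
    (φ : AA F V T →ₗ⁅F⁆ L') :
    IsLieAbelian φ.range ∨ IsAlmostAbelian F φ.range :=
  stmt11_general F V L' T φ
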